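/- The rule (→L) is semantically invertible: if either premise sequent Γ,φ⊳ψ ⇒ φ,Δ or Γ,φ⊳ψ,ψ ⇒ Δ is refutable in some LC⊳-model, then the conclusion Γ,φ→ψ ⇒ Δ is refutable in some LC⊳-model. -/

import Mathlib

/-- Formulas: atoms, ⊤, ⊥, ∧, ∨, →, irreflexive implication ⊳ (`iimp`), later ▷ (`later`). -/
inductive Fm : Type where
  | atom : ℕ → Fm
  | top : Fm
  | bot : Fm
  | and : Fm → Fm → Fm
  | or : Fm → Fm → Fm
  | imp : Fm → Fm → Fm
  | iimp : Fm → Fm → Fm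
  | later : Fm → Fm
deriving DecidableEq

/-- A KM-model: nonempty set of worlds, transitive converse-well-founded relation
(no infinite ascending chain), persistent valuation of atoms. -/
structure KMModel where
  W : Type
  nonempty : Nonempty W
  R : W → W → Prop
  trans : ∀ {x y z}, R x y → R y z → R x z
  cwf : ¬ ∃ f : ℕ → W, ∀ n, R (f n) (f (n + 1))
  val : ℕ → W → Prop
  persist : ∀ p {w x}, val p w → R w x → val p x

/-- Kripke forcing in a KM-model. -/
def KMModel.force (M : KMModel) : Fm → M.W → Prop
  | .atom p, w => M.val p w
  | .top, _ => True
  | .bot, _ => False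
  | .and a b, w => M.force a w ∧ M.force b w
  | .or a b, w => M.force a w ∨ M.force b w
  | .imp a b, w => ∀ x, (w = x ∨ M.R w x) → M.force a x → M.force b x
  | .iimp a b, w => ∀ x, M.R w x → M.force a x → M.force b x
  | .later a, w => ∀ x, M.R w x → M.force a x

/-- An LC⊳-model is a KM-model whose relation is moreover connected. -/
structure LCModel extends KMModel where
  conn : ∀ x y : W, x = y ∨ R x y ∨ R y x

/-- KM-validity. -/
def KMValid (φ : Fm) : Prop :=
  ∀ (M : KMModel) (w : M.W), M.force φ w

/-- LC⊳-validity. -/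
def LCValid (φ : Fm) : Prop :=
  ∀ (M : LCModel) (w : M.W), M.toKMModel.force φ w

/-- ω-semantics forcing (worlds are positive integers). -/
def wforce (η : ℕ → ℕ+ → Prop) : Fm → ℕ+ → Prop
  | .atom p, j => η p j
  | .top, _ => True
  | .bot, _ => False
  | .and a b, j => wforce η a j ∧ wforce η b j
  | .or a b, j => wforce η a j ∨ wforce η b j
  | .imp a b, j => ∀ k ≤ j, wforce η a k → wforce η b k
  | .iimp a b, j => ∀ k < j, wforce η a k → wforce η b k
  | .later a, j => ∀ k < j, wforce η a k

/-- `iimps G` is the set {γ ⊳ γ' | (γ,γ') ∈ G}. -/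
def iimps (G : Finset (Fm × Fm)) : Finset Fm := G.image fun p => Fm.iimp p.1 p.2

/-- `impsOf G` is the set {γ → γ' | (γ,γ') ∈ G}. -/
def impsOf (G : Finset (Fm × Fm)) : Finset Fm := G.image fun p => Fm.imp p.1 p.2

/-- `laters Θ` is the set {▷θ | θ ∈ Θ}. -/
def laters (Θ : Finset Fm) : Finset Fm := Θ.image Fm.later

def Fm.isAtom : Fm → Prop
  | .atom _ => True
  | _ => False

/-- The sequent calculus SC_LC⊳ on sequents of finite sets of formulas. -/
inductive DerivLC : Finset Fm → Finset Fm → Prop where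
  | topR (Γ Δ) : DerivLC Γ (insert Fm.top Δ)
  | botL (Γ Δ) : DerivLC (insert Fm.bot Γ) Δ
  | id (Γ Δ φ) : DerivLC (insert φ Γ) (insert φ Δ)
  | andL (Γ Δ φ ψ) : DerivLC (insert φ (insert ψ Γ)) Δ → DerivLC (insert (φ.and ψ) Γ) Δ
  | andR (Γ Δ φ ψ) : DerivLC Γ (insert φ Δ) → DerivLC Γ (insert ψ Δ) →
      DerivLC Γ (insert (φ.and ψ) Δ)
  | orL (Γ Δ φ ψ) : DerivLC (insert φ Γ) Δ → DerivLC (insert ψ Γ) Δ →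
      DerivLC (insert (φ.or ψ) Γ) Δ
  | orR (Γ Δ φ ψ) : DerivLC Γ (insert φ (insert ψ Δ)) → DerivLC Γ (insert (φ.or ψ) Δ)
  | impL (Γ Δ φ ψ) : DerivLC (insert (φ.iimp ψ) Γ) (insert φ Δ) →
      DerivLC (insert ψ (insert (φ.iimp ψ) Γ)) Δ →
      DerivLC (insert (φ.imp ψ) Γ) Δ
  | impR (Γ Δ φ ψ) : DerivLC (insert φ Γ) (insert ψ Δ) → DerivLC Γ (insert (φ.iimp ψ) Δ) →
      DerivLC Γ (insert (φ.imp ψ) Δ)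
  | step (Sl Sr Θ Φ : Finset Fm) (G D : Finset (Fm × Fm)) :
      (∀ a ∈ Sl, a.isAtom) → (∀ a ∈ Sr, a.isAtom) →
      Sl ∩ Sr = ∅ → Fm.bot ∉ Sl → Fm.top ∉ Sr →
      (D.Nonempty ∨ Φ.Nonempty) →
      (∀ pq ∈ D, DerivLC
          (Sl ∪ impsOf G ∪ Θ ∪ laters Θ ∪ ({Fm.iimp pq.1 pq.2, pq.1} : Finset Fm))
          (insert pq.2 ((impsOf D).erase (Fm.imp pq.1 pq.2) ∪ Φ))) →
      (∀ χ ∈ Φ, DerivLC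
          (Sl ∪ Θ ∪ laters Θ ∪ impsOf G ∪ ({Fm.later χ} : Finset Fm))
          (impsOf D ∪ Φ)) →
      DerivLC (Sl ∪ laters Θ ∪ iimps G) (iimps D ∪ laters Φ ∪ Sr)

/-- The sequent calculus SC_KM: same static rules, transitional rules (⊳R) and (▷R). -/
inductive DerivKM : Finset Fm → Finset Fm → Prop where
  | topR (Γ Δ) : DerivKM Γ (insert Fm.top Δ)
  | botL (Γ Δ) : DerivKM (insert Fm.bot Γ) Δ
  | id (Γ Δ φ) : DerivKM (insert φ Γ) (insert φ Δ)
  | andL (Γ Δ φ ψ) : DerivKM (insert φ (insert ψ Γ)) Δ → DerivKM (insert (φ.and ψ) Γ) Δ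
  | andR (Γ Δ φ ψ) : DerivKM Γ (insert φ Δ) → DerivKM Γ (insert ψ Δ) →
      DerivKM Γ (insert (φ.and ψ) Δ)
  | orL (Γ Δ φ ψ) : DerivKM (insert φ Γ) Δ → DerivKM (insert ψ Γ) Δ →
      DerivKM (insert (φ.or ψ) Γ) Δ
  | orR (Γ Δ φ ψ) : DerivKM Γ (insert φ (insert ψ Δ)) → DerivKM Γ (insert (φ.or ψ) Δ)
  | impL (Γ Δ φ ψ) : DerivKM (insert (φ.iimp ψ) Γ) (insert φ Δ) →
      DerivKM (insert ψ (insert (φ.iimp ψ) Γ)) Δ →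
      DerivKM (insert (φ.imp ψ) Γ) Δ
  | impR (Γ Δ φ ψ) : DerivKM (insert φ Γ) (insert ψ Δ) → DerivKM Γ (insert (φ.iimp ψ) Δ) →
      DerivKM Γ (insert (φ.imp ψ) Δ)
  | iimpR (Sl Sr Θ Φ : Finset Fm) (G D : Finset (Fm × Fm)) (φ ψ : Fm) :
      (∀ a ∈ Sl, a.isAtom) → (∀ a ∈ Sr, a.isAtom) →
      Sl ∩ Sr = ∅ → Fm.bot ∉ Sl → Fm.top ∉ Sr →
      DerivKM (Sl ∪ Θ ∪ laters Θ ∪ impsOf G ∪ ({Fm.iimp φ ψ, φ} : Finset Fm)) {ψ} →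
      DerivKM (Sl ∪ laters Θ ∪ iimps G) (insert (Fm.iimp φ ψ) (iimps D ∪ laters Φ ∪ Sr))
  | laterR (Sl Sr Θ Φ : Finset Fm) (G D : Finset (Fm × Fm)) (φ : Fm) :
      (∀ a ∈ Sl, a.isAtom) → (∀ a ∈ Sr, a.isAtom) →
      Sl ∩ Sr = ∅ → Fm.bot ∉ Sl → Fm.top ∉ Sr →
      DerivKM (Sl ∪ Θ ∪ laters Θ ∪ impsOf G ∪ ({Fm.later φ} : Finset Fm)) {φ} →
      DerivKM (Sl ∪ laters Θ ∪ iimps G) (insert (Fm.later φ) (iimps D ∪ laters Φ ∪ Sr))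

/-- A sequent is refutable (over LC⊳-models) if some world of some LC⊳-model forces
every antecedent formula and no succedent formula. -/
def RefutableLC (Γ Δ : Finset Fm) : Prop :=
  ∃ (M : LCModel) (w : M.W),
    (∀ γ ∈ Γ, M.toKMModel.force γ w) ∧ ∀ δ ∈ Δ, ¬ M.toKMModel.force δ w

/-- A sequent is refutable (over KM-models) if some world of some KM-model forces
every antecedent formula and no succedent formula. -/
def RefutableKM (Γ Δ : Finset Fm) : Prop :=
  ∃ (M : KMModel) (w : M.W),
    (∀ γ ∈ Γ, M.force γ w) ∧ ∀ δ ∈ Δ, ¬ M.force δ w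

/-- Length of a formula: number of symbol occurrences. -/
def Fm.len : Fm → ℕ
  | .atom _ => 1
  | .top => 1
  | .bot => 1
  | .and a b => a.len + b.len + 1
  | .or a b => a.len + b.len + 1
  | .imp a b => a.len + b.len + 1
  | .iimp a b => a.len + b.len + 1
  | .later a => a.len + 1

/-- An explicit numeric code for formulas. -/
def Fm.code : Fm → ℕ
  | .atom p => Nat.pair 0 p
  | .top => Nat.pair 1 0
  | .bot => Nat.pair 2 0
  | .and a b => Nat.pair 3 (Nat.pair a.code b.code)
  | .or a b => Nat.pair 4 (Nat.pair a.code b.code)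
  | .imp a b => Nat.pair 5 (Nat.pair a.code b.code)
  | .iimp a b => Nat.pair 6 (Nat.pair a.code b.code)
  | .later a => Nat.pair 7 a.code

/-- Formulas with no ⊳ and no ▷. -/
def Fm.noModal : Fm → Prop
  | .atom _ => True
  | .top => True
  | .bot => True
  | .and a b => a.noModal ∧ b.noModal
  | .or a b => a.noModal ∧ b.noModal
  | .imp a b => a.noModal ∧ b.noModal
  | .iimp _ _ => False
  | .later _ => False

/-- Classical Boolean evaluation (junk values on the modal connectives). -/
def Fm.beval (v : ℕ → Bool) : Fm → Bool
  | .atom p => v p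
  | .top => true
  | .bot => false
  | .and a b => a.beval v && b.beval v
  | .or a b => a.beval v || b.beval v
  | .imp a b => !(a.beval v) || b.beval v
  | .iimp _ _ => false
  | .later _ => false

/-! The refuting world of either premise already forces `φ → ψ`: its strict successors are
handled by `φ ⊳ ψ`, and the world itself either refutes `φ` or forces `ψ`. -/

theorem KMModel.force_imp_iff (M : KMModel) (φ ψ : Fm) (w : M.W) :
    M.force (φ.imp ψ) w ↔ (M.force φ w → M.force ψ w) ∧ M.force (φ.iimp ψ) w := by
  simp only [KMModel.force]
  constructor
  · intro h
    exact ⟨h w (Or.inl rfl), fun x hx => h x (Or.inr hx)⟩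
  · rintro ⟨hw, hsucc⟩ x (rfl | hx)
    exacts [hw, hsucc x hx]

theorem RefutableLC.insert_of_forces {Γ Δ Γ' Δ' : Finset Fm} {χ : Fm} (h : RefutableLC Γ' Δ')
    (hΓ : Γ ⊆ Γ') (hΔ : Δ ⊆ Δ')
    (hχ : ∀ (M : LCModel) (w : M.W), (∀ γ ∈ Γ', M.force γ w) → (∀ δ ∈ Δ', ¬ M.force δ w) →
      M.force χ w) :
    RefutableLC (insert χ Γ) Δ := by
  obtain ⟨M, w, hΓ', hΔ'⟩ := h
  refine ⟨M, w, ?_, fun δ hδ => hΔ' δ (hΔ hδ)⟩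
  rintro γ hγ
  rcases Finset.mem_insert.1 hγ with rfl | hγ
  · exact hχ M w hΓ' hΔ'
  · exact hΓ' γ (hΓ hγ)

/-- the rule (→L) is semantically invertible. -/
theorem impL_invertible (Γ Δ : Finset Fm) (φ ψ : Fm)
    (h : RefutableLC (insert (Fm.iimp φ ψ) Γ) (insert φ Δ) ∨
         RefutableLC (insert ψ (insert (Fm.iimp φ ψ) Γ)) Δ) :
    RefutableLC (insert (Fm.imp φ ψ) Γ) Δ := by
  rcases h with h | h
  · refine h.insert_of_forces (Finset.subset_insert _ _) (Finset.subset_insert _ _) ?_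
    intro M w hΓ hΔ
    refine (M.force_imp_iff φ ψ w).2 ⟨fun hφ => ?_, hΓ _ (Finset.mem_insert_self _ _)⟩
    exact absurd hφ (hΔ φ (Finset.mem_insert_self _ _))
  · refine h.insert_of_forces
      ((Finset.subset_insert _ _).trans (Finset.subset_insert _ _)) subset_rfl ?_
    intro M w hΓ _
    refine (M.force_imp_iff φ ψ w).2 ⟨fun _ => hΓ ψ (Finset.mem_insert_self _ _), ?_⟩
    exact hΓ _ (Finset.mem_insert_of_mem (Finset.mem_insert_self _ _))
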